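/- arXiv:2107.00241 — 4 statements merged into one kernel-verified Lean document; each statement's English description precedes it below -/
import Mathlib

section
/- Let Λ ≥ 1, 0 ≤ t ≤ Λ-1, and let L = (L_1,...,L_Λ) be a nonincreasing vector of nonnegative integers summing to K with L_1 ≥ 1. For round j ∈ [L_1], let |R_j| = |{λ ∈ [Λ] : j ≤ L_λ}|. Then the total number of transmissions, Σ_{j=1}^{L_1} ( C(Λ, t+1) - C(Λ-|R_j|, t+1) ), equals Σ_{r=1}^{Λ-t} L_r · C(Λ-r, t). -/
/-!
The round-`j` receiver set `R_j = {λ : j ≤ L λ}` is the initial segment `[1, |R_j|]` because `L` is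
nonincreasing, and by Pascal's rule `C(Λ, t+1) - C(Λ-m, t+1) = Σ_{r=1}^m C(Λ-r, t)` telescopes.
So round `j` contributes `C(Λ-r, t)` for every `r` with `j ≤ L r`; exchanging the two sums,
user `r` is counted in exactly `L r` rounds. Terms with `r > Λ - t` vanish since then `Λ - r < t`.
-/

open Finset

theorem sum_Icc_choose_sub (n k : ℕ) :
    ∀ m ≤ n, ∑ r ∈ Icc 1 m, (n - r).choose k = n.choose (k + 1) - (n - m).choose (k + 1) := by
  intro m
  induction m with
  | zero => simp
  | succ m ih =>
    intro hm
    have hpascal : (n - m).choose (k + 1) = (n - (m + 1)).choose k + (n - (m + 1)).choose (k + 1) := by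
      rw [show n - m = n - (m + 1) + 1 by omega, Nat.choose_succ_succ]
    have hle : (n - m).choose (k + 1) ≤ n.choose (k + 1) := Nat.choose_le_choose _ (by omega)
    rw [sum_Icc_succ_top (by omega), ih (by omega)]
    omega

theorem filter_Icc_eq_Icc_card {p : ℕ → Prop} [DecidablePred p] {n : ℕ}
    (hp : ∀ r s, 1 ≤ r → r ≤ s → s ≤ n → p s → p r) :
    (Icc 1 n).filter p = Icc 1 ((Icc 1 n).filter p).card := by
  set S := (Icc 1 n).filter p
  rcases S.eq_empty_or_nonempty with hS | hS
  · simp [hS]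
  · have hmax : S.max' hS ∈ S := S.max'_mem hS
    have hS_eq : S = Icc 1 (S.max' hS) := by
      ext r
      have hmax' := mem_filter.mp hmax
      simp only [S, mem_filter, mem_Icc] at hmax' ⊢
      constructor
      · rintro ⟨hr, hpr⟩
        exact ⟨hr.1, S.le_max' r (mem_filter.mpr ⟨mem_Icc.mpr hr, hpr⟩)⟩
      · rintro ⟨h1, h2⟩
        exact ⟨⟨h1, h2.trans hmax'.1.2⟩, hp r _ h1 h2 hmax'.1.2 hmax'.2⟩
    rw [hS_eq, Nat.card_Icc, Nat.add_sub_cancel]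

theorem sum_Icc_ite_le {N a : ℕ} (c : ℕ) (ha : a ≤ N) :
    ∑ j ∈ Icc 1 N, (if j ≤ a then c else 0) = a * c := by
  have : (Icc 1 N).filter (· ≤ a) = Icc 1 a := by
    ext j
    simp only [mem_filter, mem_Icc]
    omega
  rw [← sum_filter, this, sum_const, Nat.card_Icc, smul_eq_mul, Nat.add_sub_cancel]

theorem sum_Icc_mul_choose_sub_of_lt (n t : ℕ) (f : ℕ → ℕ) :
    ∑ r ∈ Icc 1 n, f r * (n - r).choose t = ∑ r ∈ Icc 1 (n - t), f r * (n - r).choose t := by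
  refine (sum_subset (fun r hr => ?_) fun r hr hr' => ?_).symm
  · simp only [mem_Icc] at hr ⊢
    omega
  · simp only [mem_Icc] at hr hr'
    rw [Nat.choose_eq_zero_of_lt (by omega), mul_zero]

theorem per_round_sum_eq_closed_form_general (Λ t : ℕ) (L : ℕ → ℕ)
    (hmono : ∀ r s, 1 ≤ r → r ≤ s → s ≤ Λ → L s ≤ L r) :
    ∑ j ∈ Finset.Icc 1 (L 1),
        (Λ.choose (t + 1) -
          (Λ - ((Finset.Icc 1 Λ).filter (fun l => j ≤ L l)).card).choose (t + 1)) =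
      ∑ r ∈ Finset.Icc 1 (Λ - t), L r * (Λ - r).choose t := by
  have round_eq (j : ℕ) (hj : 1 ≤ j) :
      Λ.choose (t + 1) - (Λ - ((Icc 1 Λ).filter (fun l => j ≤ L l)).card).choose (t + 1) =
        ∑ r ∈ Icc 1 Λ, if j ≤ L r then (Λ - r).choose t else 0 := by
    have hR := filter_Icc_eq_Icc_card (p := fun l => j ≤ L l)
      fun r s hr hrs hs hjs => hjs.trans (hmono r s hr hrs hs)
    rw [← sum_Icc_choose_sub Λ t _ ((card_filter_le _ _).trans (by simp)), ← hR, sum_filter]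
  have user_eq (r : ℕ) (hr : r ∈ Icc 1 Λ) :
      ∑ j ∈ Icc 1 (L 1), (if j ≤ L r then (Λ - r).choose t else 0) = L r * (Λ - r).choose t :=
    sum_Icc_ite_le _ (hmono 1 r le_rfl (mem_Icc.mp hr).1 (mem_Icc.mp hr).2)
  calc _ = ∑ j ∈ Icc 1 (L 1), ∑ r ∈ Icc 1 Λ, if j ≤ L r then (Λ - r).choose t else 0 :=
        sum_congr rfl fun j hj => round_eq j (mem_Icc.mp hj).1
    _ = ∑ r ∈ Icc 1 Λ, L r * (Λ - r).choose t := by rw [sum_comm]; exact sum_congr rfl user_eq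
    _ = _ := sum_Icc_mul_choose_sub_of_lt Λ t L

theorem per_round_sum_eq_closed_form (Λ t K : ℕ) (L : ℕ → ℕ) (hΛ : 1 ≤ Λ) (ht : t ≤ Λ - 1)
    (hmono : ∀ r s, 1 ≤ r → r ≤ s → s ≤ Λ → L s ≤ L r)
    (hsum : ∑ r ∈ Finset.Icc 1 Λ, L r = K) (hL1 : 1 ≤ L 1) :
    ∑ j ∈ Finset.Icc 1 (L 1),
        (Λ.choose (t + 1) -
          (Λ - ((Finset.Icc 1 Λ).filter (fun l => j ≤ L l)).card).choose (t + 1)) =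
      ∑ r ∈ Finset.Icc 1 (Λ - t), L r * (Λ - r).choose t :=
  per_round_sum_eq_closed_form_general Λ t L hmono
end

section
/- Every square submatrix of a Cauchy matrix is invertible. Precisely, let F be a field, and let x_1,...,x_n, y_1,...,y_n ∈ F be 2n pairwise distinct elements; define the Cauchy matrix G by G_{ij} = 1/(x_i - y_j). Then every square submatrix of G (obtained by selecting any subset of rows and an equal-size subset of columns) is invertible. -/
/-!
A vector `v` in the kernel of the Cauchy matrix `((x i - y j)⁻¹)` is turned into the polynomial
interpolating the values `v j / w j` at the nodes `y j`, where `w` are the barycentric weights of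
the `y j`. By the first barycentric formula this polynomial takes at `x i` the value
`∏ⱼ (x i - y j) * ∑ⱼ v j / (x i - y j) = 0`, so it has more roots than its degree allows; hence
it is zero, and so are its values `v j / w j` at the nodes.
-/

open Polynomial Lagrange Finset

namespace Matrix

variable {F κ ι : Type*} [Field F]

def cauchy (x : κ → F) (y : ι → F) : Matrix κ ι F :=
  of fun i j => (x i - y j)⁻¹

@[simp]
lemma cauchy_apply (x : κ → F) (y : ι → F) (i : κ) (j : ι) :
    cauchy x y i j = (x i - y j)⁻¹ :=
  rfl

lemma submatrix_cauchy {κ' ι' : Type*} (x : κ → F) (y : ι → F) (r : κ' → κ) (c : ι' → ι) :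
    (cauchy x y).submatrix r c = cauchy (x ∘ r) (y ∘ c) :=
  rfl

variable [Fintype ι] [DecidableEq ι]

lemma eval_interpolate_eq_eval_nodal_mul_cauchy_mulVec (x : κ → F) (y : ι → F)
    (hxy : ∀ i j, x i ≠ y j) (r : ι → F) (i : κ) :
    (interpolate univ y r).eval (x i) =
      (nodal univ y).eval (x i) * (cauchy x y *ᵥ fun j => nodalWeight univ y j * r j) i := by
  rw [eval_interpolate_not_at_node r fun j _ => hxy i j]
  simp only [mulVec, dotProduct, cauchy_apply, mul_left_comm, mul_assoc]

lemma cauchy_mulVec_eq_zero_iff [Fintype κ] {x : κ → F} {y : ι → F}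
    (hx : Function.Injective x) (hy : Function.Injective y) (hxy : ∀ i j, x i ≠ y j)
    (hcard : Fintype.card ι ≤ Fintype.card κ) {v : ι → F} :
    cauchy x y *ᵥ v = 0 ↔ v = 0 := by
  refine ⟨fun hv => ?_, fun hv => hv ▸ mulVec_zero _⟩
  have hw (j : ι) : nodalWeight univ y j ≠ 0 := nodalWeight_ne_zero hy.injOn (mem_univ j)
  set p := interpolate univ y fun j => v j / nodalWeight univ y j
  have hroots (i : κ) : p.eval (x i) = 0 := by
    simp only [p, eval_interpolate_eq_eval_nodal_mul_cauchy_mulVec x y hxy,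
      mul_div_cancel₀ _ (hw _), hv, Pi.zero_apply, mul_zero]
  have hdeg : p.degree < #(univ : Finset κ) :=
    (degree_interpolate_lt _ hy.injOn).trans_le (by exact_mod_cast hcard)
  have hp : p = 0 :=
    eq_zero_of_degree_lt_of_eval_index_eq_zero _ hx.injOn hdeg fun i _ => hroots i
  funext j
  have hnode : p.eval (y j) = v j / nodalWeight univ y j :=
    eval_interpolate_at_node _ hy.injOn (mem_univ j)
  rw [hp, eval_zero, eq_comm, div_eq_zero_iff] at hnode
  exact hnode.resolve_right (hw j)

lemma det_cauchy_ne_zero {x y : ι → F} (hx : Function.Injective x) (hy : Function.Injective y)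
    (hxy : ∀ i j, x i ≠ y j) : (cauchy x y).det ≠ 0 := by
  rw [Ne, ← exists_mulVec_eq_zero_iff]
  rintro ⟨v, hv, hker⟩
  exact hv ((cauchy_mulVec_eq_zero_iff hx hy hxy le_rfl).mp hker)

end Matrix

open Matrix in
theorem cauchy_submatrix_invertible {F : Type*} [Field F] (n : ℕ)
    (x y : Fin n → F)
    (hx : Function.Injective x) (hy : Function.Injective y)
    (hxy : ∀ i j, x i ≠ y j)
    (G : Matrix (Fin n) (Fin n) F) (hG : ∀ i j, G i j = (x i - y j)⁻¹)
    (m : ℕ) (r c : Fin m → Fin n)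
    (hr : Function.Injective r) (hc : Function.Injective c) :
    Nonempty (Invertible (G.submatrix r c)) := by
  have hGc : G = cauchy x y := ext hG
  have hdet : (G.submatrix r c).det ≠ 0 := by
    rw [hGc, submatrix_cauchy]
    exact det_cauchy_ne_zero (hx.comp hr) (hy.comp hc) fun i j => hxy (r i) (c j)
  exact ⟨invertibleOfIsUnitDet _ hdet.isUnit⟩
end

section
/- Let F be a finite field, a, b ≥ 1, n = a+b, and G an n×n matrix over F such that every b×b submatrix formed by any b rows and the last b columns is invertible. Let W be an F^a-valued random variable and V uniform on F^b independent of W, and set S = G·[W;V]. Then for any subset T of at most b coordinates of S, I(W; S_T) = 0. -/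
open MeasureTheory ProbabilityTheory

open scoped Matrix

/-!
Restricted to `T`, the shares are `A W + B V`, where `B` consists of the rows in `T` of the last
`b` columns of `G`. Any `b` of those rows form an invertible matrix and `|T| ≤ b`, so `B` is
surjective and `B V` is again uniform, in particular translation invariant, and independent of `W`.
A translation-invariant pad independent of `W` hides anything computed from `W` that is added to it.
-/

theorem ProbabilityTheory.IndepFun.indepFun_add_of_isAddLeftInvariant
    {Ω α G : Type*} [MeasurableSpace Ω] {μ : Measure Ω} [IsProbabilityMeasure μ]
    [MeasurableSpace α] [MeasurableSpace G] [Add G] [MeasurableAdd₂ G]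
    {X : Ω → α} {Y : Ω → G} (hXY : IndepFun X Y μ) (hX : Measurable X) (hY : Measurable Y)
    [(μ.map Y).IsAddLeftInvariant] {g : α → G} (hg : Measurable g) :
    IndepFun X (fun ω => g (X ω) + Y ω) μ := by
  have : IsProbabilityMeasure (μ.map X) := Measure.isProbabilityMeasure_map hX.aemeasurable
  have hZ : Measurable fun ω => g (X ω) + Y ω := (hg.comp hX).add hY
  have hshear : MeasurePreserving (fun p : α × G => (p.1, g p.1 + p.2))
      ((μ.map X).prod (μ.map Y)) ((μ.map X).prod (μ.map Y)) :=
    (MeasurePreserving.id _).skew_product ((hg.comp measurable_fst).add measurable_snd)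
      (ae_of_all _ fun x => map_add_left_eq_self _ (g x))
  have hjoint : μ.map (fun ω => (X ω, g (X ω) + Y ω)) = (μ.map X).prod (μ.map Y) := by
    rw [← hshear.map_eq, ← hXY.map_prod_eq_prod_map_map hX.aemeasurable hY.aemeasurable,
      Measure.map_map hshear.measurable (hX.prodMk hY)]
    rfl
  have hpad : μ.map (fun ω => g (X ω) + Y ω) = μ.map Y := by
    rw [← Measure.snd_prod (μ := μ.map X) (ν := μ.map Y), ← hjoint, Measure.snd,
      Measure.map_map measurable_snd (hX.prodMk hZ)]
    rfl
  rw [indepFun_iff_map_prod_eq_prod_map_map hX.aemeasurable hZ.aemeasurable, hjoint, hpad]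

instance PMF.isAddLeftInvariant_toMeasure_uniformOfFintype {G : Type*} [AddGroup G] [Fintype G]
    [MeasurableSpace G] [DiscreteMeasurableSpace G] :
    (PMF.uniformOfFintype G).toMeasure.IsAddLeftInvariant := by
  classical
  refine ⟨fun g => Measure.ext fun s _ => ?_⟩
  rw [Measure.map_apply (measurable_const_add g) .of_discrete,
    toMeasure_uniformOfFintype_apply _ .of_discrete, toMeasure_uniformOfFintype_apply _ .of_discrete]
  congr 2
  exact Fintype.card_congr ((Equiv.addLeft g).subtypeEquiv fun _ => Iff.rfl)

theorem Matrix.mulVec_submatrix_surjective {m n k R : Type*} [Fintype n] [Semiring R]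
    (M : Matrix m n R) {f : k → m} (hf : Function.Injective f)
    (hM : Function.Surjective M.mulVec) : Function.Surjective (M.submatrix f id).mulVec :=
  hf.surjective_comp_right.comp hM

theorem Matrix.mulVec_submatrix_surjective_of_card_le {m n R : Type*} [Fintype m] [Fintype n]
    [DecidableEq n] [CommRing R] (M : Matrix m n R)
    (hM : ∀ r : n → m, Function.Injective r → IsUnit (M.submatrix r id).det)
    (T : Finset m) (hT : T.card ≤ Fintype.card n) (hnm : Fintype.card n ≤ Fintype.card m) :
    Function.Surjective (M.submatrix ((↑) : T → m) id).mulVec := by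
  obtain ⟨T', hTT', hT'⟩ := Finset.exists_subsuperset_card_eq T.subset_univ hT (by simpa)
  let e : n ≃ T' := Fintype.equivOfCardEq (by simp [hT'])
  let r : n → m := (↑) ∘ e
  have hr : Function.Injective r := Subtype.val_injective.comp e.injective
  let f : T → n := fun i => e.symm ⟨i, hTT' i.2⟩
  have hrf : r ∘ f = (↑) := funext fun i => by simp [r, f]
  have hsub : M.submatrix ((↑) : T → m) id = (M.submatrix r id).submatrix f id := by
    rw [Matrix.submatrix_submatrix, hrf]; rfl
  rw [hsub]
  exact (M.submatrix r id).mulVec_submatrix_surjective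
    (Function.Injective.of_comp (hrf ▸ Subtype.val_injective))
    (Matrix.mulVec_surjective_iff_isUnit.2 ((Matrix.isUnit_iff_isUnit_det _).2 (hM r hr)))

theorem shares_leak_nothing_general
    {Ω : Type*} [MeasurableSpace Ω] (μ : Measure Ω) [IsProbabilityMeasure μ]
    {F : Type*} [Field F] [Fintype F] [MeasurableSpace F] [DiscreteMeasurableSpace F]
    (a b : ℕ)
    (G : Matrix (Fin (a + b)) (Fin (a + b)) F)
    (hG : ∀ r : Fin b → Fin (a + b), Function.Injective r →
      IsUnit (G.submatrix r (Fin.natAdd a : Fin b → Fin (a + b))).det)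
    (W : Ω → (Fin a → F)) (V : Ω → (Fin b → F))
    (hW : Measurable W) (hV : Measurable V)
    (hunif : μ.map V = (PMF.uniformOfFintype (Fin b → F)).toMeasure)
    (hindep : IndepFun W V μ)
    (S : Ω → (Fin (a + b) → F))
    (hS : ∀ ω, S ω = G.mulVec (Fin.append (W ω) (V ω)))
    (T : Finset (Fin (a + b))) (hT : T.card ≤ b) :
    IndepFun W (fun ω => (fun i : T => S ω i)) μ := by
  set A := G.submatrix ((↑) : T → Fin (a + b)) (Fin.castAdd b)
  set B := (G.submatrix id (Fin.natAdd a)).submatrix ((↑) : T → Fin (a + b)) id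
  have hshares : (fun ω => (fun i : T => S ω i)) = fun ω => A *ᵥ W ω + B *ᵥ V ω := by
    funext ω i
    simp [hS, A, B, Matrix.mulVec, dotProduct, Fin.sum_univ_add]
  have hB : Function.Surjective B.mulVec :=
    Matrix.mulVec_submatrix_surjective_of_card_le _ hG T (by simpa using hT) (by simp)
  have : (μ.map V).IsAddLeftInvariant := hunif ▸ inferInstance
  have : (μ.map (B.mulVec ∘ V)).IsAddLeftInvariant := by
    rw [← Measure.map_map .of_discrete hV]
    exact isAddLeftInvariant_map B.mulVecLin.toAddMonoidHom.toAddHom .of_discrete hB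
  have hpad : IndepFun W (B.mulVec ∘ V) μ := hindep.comp measurable_id .of_discrete
  rw [hshares]
  exact hpad.indepFun_add_of_isAddLeftInvariant hW (Measurable.of_discrete.comp hV) .of_discrete

theorem shares_leak_nothing
    {Ω : Type*} [MeasurableSpace Ω] (μ : Measure Ω) [IsProbabilityMeasure μ]
    {F : Type*} [Field F] [Fintype F] [MeasurableSpace F] [DiscreteMeasurableSpace F]
    (a b : ℕ) (ha : 1 ≤ a) (hb : 1 ≤ b)
    (G : Matrix (Fin (a + b)) (Fin (a + b)) F)
    (hG : ∀ r : Fin b → Fin (a + b), Function.Injective r →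
      IsUnit (G.submatrix r (Fin.natAdd a : Fin b → Fin (a + b))).det)
    (W : Ω → (Fin a → F)) (V : Ω → (Fin b → F))
    (hW : Measurable W) (hV : Measurable V)
    (hunif : μ.map V = (PMF.uniformOfFintype (Fin b → F)).toMeasure)
    (hindep : IndepFun W V μ)
    (S : Ω → (Fin (a + b) → F))
    (hS : ∀ ω, S ω = G.mulVec (Fin.append (W ω) (V ω)))
    (T : Finset (Fin (a + b))) (hT : T.card ≤ b) :
    IndepFun W (fun ω => (fun i : T => S ω i)) μ :=
  shares_leak_nothing_general μ a b G hG W V hW hV hunif hindep S hS T hT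
end

section
/- For Λ ≥ 2, if t₁ < t₂ are both in {0,1,...,Λ-1} and L is a fixed nonincreasing profile summing to K with L_Λ ≥ 1 (all caches occupied), then R^s with parameter t₂ is at most R^s with parameter t₁, where R^s(L,t) = Σ_{r=1}^{Λ-t} L_r·C(Λ-r,t)/C(Λ-1,t) for t ≥ 1 and R^s(L,0) = K. -/
open Finset

/-! The weight `C(Λ - r, t) / C(Λ - 1, t)` of each `L r` is antitone in `t`, because
`C(n, t + 1) / C(n, t) = (n - t) / (t + 1)` grows with `n`. Extending every sum to `r ∈ [1, Λ]`
(the extra terms vanish) and reading `K` as the `t = 0` sum, `R^s` becomes a nonnegative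
combination of antitone functions of `t`. -/

theorem Nat.choose_succ_mul_choose_le {n m : ℕ} (h : n ≤ m) (t : ℕ) :
    n.choose (t + 1) * m.choose t ≤ n.choose t * m.choose (t + 1) := by
  refine Nat.le_of_mul_le_mul_right ?_ t.succ_pos
  calc n.choose (t + 1) * m.choose t * (t + 1)
      = n.choose t * (n - t) * m.choose t := by rw [mul_right_comm, Nat.choose_succ_right_eq]
    _ ≤ n.choose t * (m - t) * m.choose t := by gcongr
    _ = n.choose t * m.choose (t + 1) * (t + 1) := by
      rw [mul_assoc _ (m.choose (t + 1)), Nat.choose_succ_right_eq]; ring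

/-- Once `m < t`, the quotient is the junk value `0 / 0 = 0`. -/
theorem antitone_choose_div_choose {n m : ℕ} (h : n ≤ m) :
    Antitone fun t => (n.choose t : ℝ) / m.choose t := by
  refine antitone_nat_of_succ_le fun t => ?_
  rcases lt_or_ge m (t + 1) with hlt | hle
  · simp only [Nat.choose_eq_zero_of_lt hlt, Nat.cast_zero, div_zero]
    positivity
  · have hpos : (0 : ℝ) < m.choose (t + 1) := by exact_mod_cast Nat.choose_pos hle
    have hpos' : (0 : ℝ) < m.choose t := by exact_mod_cast Nat.choose_pos (by omega)
    rw [div_le_div_iff₀ hpos hpos']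
    exact_mod_cast Nat.choose_succ_mul_choose_le h t

theorem sum_Icc_mul_choose_sub_eq (f : ℕ → ℝ) (a Λ t : ℕ) :
    ∑ r ∈ Icc a (Λ - t), f r * (Λ - r).choose t = ∑ r ∈ Icc a Λ, f r * (Λ - r).choose t := by
  refine sum_subset (Icc_subset_Icc_right (Nat.sub_le Λ t)) fun r hr hr' => ?_
  simp only [mem_Icc, not_and, not_le] at hr hr'
  rw [Nat.choose_eq_zero_of_lt (by omega), Nat.cast_zero, mul_zero]

theorem rate_monotone_in_t_general (Λ K : ℕ) (L : ℕ → ℕ)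
    (hsum : ∑ r ∈ Finset.Icc 1 Λ, L r = K)
    (Rs : ℕ → ℝ)
    (hRs : ∀ t, Rs t = if t = 0 then (K : ℝ)
      else (∑ r ∈ Finset.Icc 1 (Λ - t), (L r : ℝ) * (Λ - r).choose t) / ((Λ - 1).choose t))
    (t₁ t₂ : ℕ) (h12 : t₁ < t₂) :
    Rs t₂ ≤ Rs t₁ := by
  have hRs_sum : ∀ t, Rs t = ∑ r ∈ Icc 1 Λ, (L r : ℝ) * ((Λ - r).choose t / (Λ - 1).choose t) := by
    intro t
    rw [hRs]
    split_ifs with ht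
    · simp [ht, ← hsum]
    · simp only [sum_Icc_mul_choose_sub_eq, sum_div, mul_div_assoc]
  rw [hRs_sum, hRs_sum]
  gcongr ∑ r ∈ _, _ * ?_ with r hr
  exact antitone_choose_div_choose (Nat.sub_le_sub_left (mem_Icc.mp hr).1 Λ) h12.le

theorem rate_monotone_in_t (Λ K : ℕ) (L : ℕ → ℕ) (hΛ : 2 ≤ Λ)
    (hmono : ∀ r s, 1 ≤ r → r ≤ s → s ≤ Λ → L s ≤ L r)
    (hsum : ∑ r ∈ Finset.Icc 1 Λ, L r = K) (hLΛ : 1 ≤ L Λ)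
    (Rs : ℕ → ℝ)
    (hRs : ∀ t, Rs t = if t = 0 then (K : ℝ)
      else (∑ r ∈ Finset.Icc 1 (Λ - t), (L r : ℝ) * (Λ - r).choose t) / ((Λ - 1).choose t))
    (t₁ t₂ : ℕ) (h12 : t₁ < t₂) (ht₂ : t₂ ≤ Λ - 1) :
    Rs t₂ ≤ Rs t₁ :=
  rate_monotone_in_t_general Λ K L hsum Rs hRs t₁ t₂ h12
end
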